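/- arXiv:0808.3773 — 4 statements merged into one kernel-verified Lean document; each statement's English description precedes it below -/
import Mathlib

section
/- Quadratic bounds on the fermionic entropy function: For every x ∈ [−1, 1], the function f(x) = −((1−x)/2)·log₂((1−x)/2) − ((1+x)/2)·log₂((1+x)/2) satisfies (1 − x²)^{1/2} ≥ f(x) ≥ 1 − x². -/
/-- The fermionic binary-entropy-type function
`f(x) = −((1−x)/2)·log₂((1−x)/2) − ((1+x)/2)·log₂((1+x)/2)`.
Note that `Real.logb 2 0 = 0`, so the convention `0·log₂ 0 = 0` is automatic. -/
noncomputable def fermiEntropy (x : ℝ) : ℝ :=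
  -((1 - x) / 2 * Real.logb 2 ((1 - x) / 2)) - (1 + x) / 2 * Real.logb 2 ((1 + x) / 2)

open Real Set

/-!
With `φ x = (1 + x) log (1 + x) + (1 - x) log (1 - x)` one has
`fermiEntropy x = 1 - φ x / (2 log 2)`, and `φ` is even, so both bounds become inequalities
`0 ≤ g` on `[0, 1]` with `g 0 = g' 0 = g 1 = 0`. In both cases `g''` changes sign once, from `+`
to `-`, where `1 - x²` crosses a threshold; such a `g` increases on its convex part and lies above
its nonnegative chord on its concave part.
-/

section SignChange

variable {f f' f'' : ℝ → ℝ} {a b c : ℝ}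

theorem monotoneOn_Icc_of_hasDerivAt_nonneg (hf : ContinuousOn f (Icc a b))
    (hff' : ∀ x ∈ Ioo a b, HasDerivAt f (f' x) x) (hf' : ∀ x ∈ Ioo a b, 0 ≤ f' x) :
    MonotoneOn f (Icc a b) := by
  refine monotoneOn_of_hasDerivWithinAt_nonneg (convex_Icc a b) hf (f' := f') ?_ ?_ <;>
    rw [interior_Icc]
  · exact fun x hx => (hff' x hx).hasDerivWithinAt
  · exact hf'

theorem concaveOn_Icc_of_hasDerivAt2_nonpos (hf : ContinuousOn f (Icc a b))
    (hff' : ∀ x ∈ Ioo a b, HasDerivAt f (f' x) x)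
    (hf'f'' : ∀ x ∈ Ioo a b, HasDerivAt f' (f'' x) x) (hf'' : ∀ x ∈ Ioo a b, f'' x ≤ 0) :
    ConcaveOn ℝ (Icc a b) f := by
  refine concaveOn_of_hasDerivWithinAt2_nonpos (convex_Icc a b) hf (f' := f') (f'' := f'')
    ?_ ?_ ?_ <;> rw [interior_Icc]
  · exact fun x hx => (hff' x hx).hasDerivWithinAt
  · exact fun x hx => (hf'f'' x hx).hasDerivWithinAt
  · exact hf''

theorem monotoneOn_Icc_of_hasDerivAt2_nonneg (hf : ContinuousOn f (Icc a b))
    (hf' : ContinuousOn f' (Icc a b)) (hff' : ∀ x ∈ Ioo a b, HasDerivAt f (f' x) x)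
    (hf'f'' : ∀ x ∈ Ioo a b, HasDerivAt f' (f'' x) x) (ha' : 0 ≤ f' a)
    (hf'' : ∀ x ∈ Ioo a b, 0 ≤ f'' x) : MonotoneOn f (Icc a b) := by
  have hf'_mono := monotoneOn_Icc_of_hasDerivAt_nonneg hf' hf'f'' hf''
  refine monotoneOn_Icc_of_hasDerivAt_nonneg hf hff' fun x hx => ha'.trans ?_
  exact hf'_mono (left_mem_Icc.2 (hx.1.le.trans hx.2.le)) (Ioo_subset_Icc_self hx) hx.1.le

theorem nonneg_of_hasDerivAt2_nonneg_of_nonpos (hac : a ≤ c) (hcb : c < b)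
    (hf : ContinuousOn f (Icc a b)) (hff' : ∀ x ∈ Ioo a b, HasDerivAt f (f' x) x)
    (hf'f'' : ∀ x ∈ Ico a b, HasDerivAt f' (f'' x) x) (ha : 0 ≤ f a) (ha' : 0 ≤ f' a)
    (hb : 0 ≤ f b) (hconvex : ∀ x ∈ Ioo a c, 0 ≤ f'' x) (hconcave : ∀ x ∈ Ioo c b, f'' x ≤ 0) :
    ∀ x ∈ Icc a b, 0 ≤ f x := by
  have hac_ab : Icc a c ⊆ Icc a b := Icc_subset_Icc_right hcb.le
  have hcb_ab : Icc c b ⊆ Icc a b := Icc_subset_Icc_left hac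
  have hf_mono : MonotoneOn f (Icc a c) :=
    monotoneOn_Icc_of_hasDerivAt2_nonneg (hf.mono hac_ab)
      (fun x hx => (hf'f'' x ⟨hx.1, hx.2.trans_lt hcb⟩).continuousAt.continuousWithinAt)
      (fun x hx => hff' x ⟨hx.1, hx.2.trans hcb⟩)
      (fun x hx => hf'f'' x ⟨hx.1.le, hx.2.trans hcb⟩) ha' hconvex
  have hf_nonneg_left : ∀ x ∈ Icc a c, 0 ≤ f x := fun x hx =>
    ha.trans (hf_mono (left_mem_Icc.2 hac) hx hx.1)
  have hf_concave : ConcaveOn ℝ (Icc c b) f :=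
    concaveOn_Icc_of_hasDerivAt2_nonpos (hf.mono hcb_ab)
      (fun x hx => hff' x ⟨hac.trans_lt hx.1, hx.2⟩)
      (fun x hx => hf'f'' x ⟨hac.trans hx.1.le, hx.2⟩) hconcave
  intro x hx
  rcases le_total x c with hxc | hcx
  · exact hf_nonneg_left x ⟨hx.1, hxc⟩
  · calc 0 ≤ min (f c) (f b) := le_min (hf_nonneg_left c (right_mem_Icc.2 hac)) hb
      _ ≤ f x := hf_concave.min_le_of_mem_Icc (left_mem_Icc.2 hcb.le)
          (right_mem_Icc.2 hcb.le) ⟨hcx, hx.2⟩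

end SignChange

/-- The function `φ`: twice the relative entropy (in nats) of the Bernoulli law of parameter
`(1 + x)/2` with respect to the fair coin. -/
noncomputable def entropyDeficit (x : ℝ) : ℝ :=
  (1 + x) * log (1 + x) + (1 - x) * log (1 - x)

theorem fermiEntropy_eq_one_sub_entropyDeficit_div (x : ℝ) :
    fermiEntropy x = 1 - entropyDeficit x / (2 * log 2) := by
  have mul_log_half : ∀ y : ℝ, y / 2 * log (y / 2) = y / 2 * log y - y / 2 * log 2 := by
    intro y
    rcases eq_or_ne y 0 with rfl | hy
    · simp
    · rw [log_div hy two_ne_zero]; ring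
  have hlog : log 2 ≠ 0 := by positivity
  simp only [fermiEntropy, entropyDeficit, logb, mul_div_assoc', mul_log_half]
  field_simp
  ring

theorem entropyDeficit_abs (x : ℝ) : entropyDeficit |x| = entropyDeficit x := by
  rcases abs_choice x with h | h <;> simp only [h, entropyDeficit]
  ring_nf

theorem continuous_entropyDeficit : Continuous entropyDeficit :=
  (continuous_mul_log.comp (continuous_const.add continuous_id)).add
    (continuous_mul_log.comp (continuous_const.sub continuous_id))

section Derivatives

variable {x : ℝ}

theorem one_sub_sq_pos (hx : x ∈ Ioo (-1 : ℝ) 1) : 0 < 1 - x ^ 2 := by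
  nlinarith [hx.1, hx.2]

theorem hasDerivAt_log_one_add (hx : -1 < x) :
    HasDerivAt (fun y => log (1 + y)) (1 / (1 + x)) x := by
  simpa using ((hasDerivAt_id' x).const_add 1).log (by linarith)

theorem hasDerivAt_log_one_sub (hx : x < 1) :
    HasDerivAt (fun y => log (1 - y)) (-(1 / (1 - x))) x := by
  simpa [neg_div] using ((hasDerivAt_id' x).const_sub 1).log (by linarith)

theorem hasDerivAt_entropyDeficit (hx : x ∈ Ioo (-1 : ℝ) 1) :
    HasDerivAt entropyDeficit (log (1 + x) - log (1 - x)) x := by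
  have h1 : 1 + x ≠ 0 := by linarith [hx.1]
  have h2 : 1 - x ≠ 0 := by linarith [hx.2]
  refine ((((hasDerivAt_id' x).const_add 1).mul (hasDerivAt_log_one_add hx.1)).add
    (((hasDerivAt_id' x).const_sub 1).mul (hasDerivAt_log_one_sub hx.2))).congr_deriv ?_
  field_simp
  ring

theorem hasDerivAt_log_one_add_sub_log_one_sub (hx : x ∈ Ioo (-1 : ℝ) 1) :
    HasDerivAt (fun y => log (1 + y) - log (1 - y)) (2 / (1 - x ^ 2)) x := by
  have h1 : 1 + x ≠ 0 := by linarith [hx.1]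
  have h2 : 1 - x ≠ 0 := by linarith [hx.2]
  refine ((hasDerivAt_log_one_add hx.1).sub (hasDerivAt_log_one_sub hx.2)).congr_deriv ?_
  rw [show 1 - x ^ 2 = (1 + x) * (1 - x) by ring]
  field_simp
  ring

theorem hasDerivAt_sqrt_one_sub_sq (hx : x ∈ Ioo (-1 : ℝ) 1) :
    HasDerivAt (fun y => √(1 - y ^ 2)) (-x / √(1 - x ^ 2)) x := by
  refine (((hasDerivAt_pow 2 x).const_sub 1).sqrt (one_sub_sq_pos hx).ne').congr_deriv ?_
  field_simp
  ring

theorem hasDerivAt_div_sqrt_one_sub_sq (hx : x ∈ Ioo (-1 : ℝ) 1) :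
    HasDerivAt (fun y => y / √(1 - y ^ 2)) (1 / ((1 - x ^ 2) * √(1 - x ^ 2))) x := by
  have hpos := one_sub_sq_pos hx
  have hsqrt : 0 < √(1 - x ^ 2) := sqrt_pos.2 hpos
  refine ((hasDerivAt_id' x).fun_div (hasDerivAt_sqrt_one_sub_sq hx) hsqrt.ne').congr_deriv ?_
  have := sq_sqrt hpos.le
  field_simp
  nlinarith

end Derivatives

section Bounds

variable {x y t : ℝ}

theorem lt_one_sub_sq_of_lt_sqrt (hy : 0 ≤ y) (h : y < √(1 - t)) : t < 1 - y ^ 2 := by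
  linarith [(lt_sqrt hy).1 h]

theorem one_sub_sq_lt_of_sqrt_lt (h : √(1 - t) < y) : 1 - y ^ 2 < t := by
  linarith [(sqrt_lt' ((sqrt_nonneg _).trans_lt h)).1 h]

theorem entropyDeficit_le_two_mul_log_two_mul_sq (hx : x ∈ Icc (-1 : ℝ) 1) :
    entropyDeficit x ≤ 2 * log 2 * x ^ 2 := by
  suffices h : ∀ y ∈ Icc (0 : ℝ) 1, 0 ≤ 2 * log 2 * y ^ 2 - entropyDeficit y by
    simpa [entropyDeficit_abs, sq_abs] using h |x| ⟨abs_nonneg x, abs_le.2 hx⟩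
  have hlog : 0 < 4 * log 2 := by positivity
  have hmem : ∀ y ∈ Ico (0 : ℝ) 1, y ∈ Ioo (-1 : ℝ) 1 := fun y hy => ⟨by linarith [hy.1], hy.2⟩
  refine nonneg_of_hasDerivAt2_nonneg_of_nonpos (c := √(1 - 2 / (4 * log 2)))
    (f' := fun y => 4 * log 2 * y - (log (1 + y) - log (1 - y)))
    (f'' := fun y => 4 * log 2 - 2 / (1 - y ^ 2)) (sqrt_nonneg _) ?_
    ((continuous_const.mul (continuous_pow 2)).sub continuous_entropyDeficit).continuousOn
    (fun y hy => ?_) (fun y hy => ?_) (by simp [entropyDeficit]) (by simp)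
    (by norm_num [entropyDeficit]) (fun y hy => ?_) (fun y hy => ?_)
  · rw [sqrt_lt' one_pos]
    linarith [show 0 < 2 / (4 * log 2) by positivity]
  · exact (((hasDerivAt_pow 2 y).const_mul _).sub
      (hasDerivAt_entropyDeficit (hmem y (Ioo_subset_Ico_self hy)))).congr_deriv (by ring)
  · exact (((hasDerivAt_id' y).const_mul _).sub
      (hasDerivAt_log_one_add_sub_log_one_sub (hmem y hy))).congr_deriv (by ring)
  · have hy2 := lt_one_sub_sq_of_lt_sqrt hy.1.le hy.2
    have hpos : 0 < 1 - y ^ 2 := lt_trans (by positivity) hy2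
    exact sub_nonneg.2 ((div_le_comm₀ hpos hlog).2 hy2.le)
  · have hpos := one_sub_sq_pos (hmem y ⟨(sqrt_nonneg _).trans hy.1.le, hy.2⟩)
    exact sub_nonpos.2 ((le_div_comm₀ hlog hpos).2 (one_sub_sq_lt_of_sqrt_lt hy.1).le)

theorem two_mul_log_two_mul_one_sub_sqrt_le_entropyDeficit (hx : x ∈ Icc (-1 : ℝ) 1) :
    2 * log 2 * (1 - √(1 - x ^ 2)) ≤ entropyDeficit x := by
  suffices h : ∀ y ∈ Icc (0 : ℝ) 1, 0 ≤ entropyDeficit y - 2 * log 2 * (1 - √(1 - y ^ 2)) by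
    simpa [entropyDeficit_abs, sq_abs] using h |x| ⟨abs_nonneg x, abs_le.2 hx⟩
  have hlog : 0 < log 2 := by positivity
  have hmem : ∀ y ∈ Ico (0 : ℝ) 1, y ∈ Ioo (-1 : ℝ) 1 := fun y hy => ⟨by linarith [hy.1], hy.2⟩
  refine nonneg_of_hasDerivAt2_nonneg_of_nonpos (c := √(1 - log 2 ^ 2))
    (f' := fun y => log (1 + y) - log (1 - y) - 2 * log 2 * (y / √(1 - y ^ 2)))
    (f'' := fun y => 2 / (1 - y ^ 2) * (1 - log 2 / √(1 - y ^ 2))) (sqrt_nonneg _) ?_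
    (continuous_entropyDeficit.sub (continuous_const.mul (continuous_const.sub
      (continuous_const.sub (continuous_pow 2)).sqrt))).continuousOn
    (fun y hy => ?_) (fun y hy => ?_) (by simp [entropyDeficit]) (by simp)
    (by norm_num [entropyDeficit]) (fun y hy => ?_) (fun y hy => ?_)
  · rw [sqrt_lt' one_pos]
    linarith [show 0 < log 2 ^ 2 by positivity]
  · have hy := hmem y (Ioo_subset_Ico_self hy)
    exact ((hasDerivAt_entropyDeficit hy).sub
      (((hasDerivAt_sqrt_one_sub_sq hy).const_sub 1).const_mul _)).congr_deriv (by ring)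
  · exact ((hasDerivAt_log_one_add_sub_log_one_sub (hmem y hy)).sub
      ((hasDerivAt_div_sqrt_one_sub_sq (hmem y hy)).const_mul _)).congr_deriv
      (by rw [← one_div_mul_one_div]; ring)
  · have hy2 := lt_one_sub_sq_of_lt_sqrt hy.1.le hy.2
    have hpos : 0 < 1 - y ^ 2 := lt_trans (by positivity) hy2
    have hs : log 2 < √(1 - y ^ 2) := (lt_sqrt hlog.le).2 hy2
    exact mul_nonneg (by positivity) (sub_nonneg.2 ((div_le_one (hlog.trans hs)).2 hs.le))
  · have hpos := one_sub_sq_pos (hmem y ⟨(sqrt_nonneg _).trans hy.1.le, hy.2⟩)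
    have hs : √(1 - y ^ 2) < log 2 := (sqrt_lt' hlog).2 (one_sub_sq_lt_of_sqrt_lt hy.1)
    exact mul_nonpos_of_nonneg_of_nonpos (by positivity)
      (sub_nonpos.2 ((one_le_div (sqrt_pos.2 hpos)).2 hs.le))

end Bounds

/-- Quadratic bounds on the fermionic entropy function:
for every `x ∈ [−1, 1]`, `√(1 − x²) ≥ f(x) ≥ 1 − x²`. -/
theorem fermiEntropy_quadratic_bounds (x : ℝ) (hx : x ∈ Set.Icc (-1 : ℝ) 1) :
    1 - x ^ 2 ≤ fermiEntropy x ∧ fermiEntropy x ≤ Real.sqrt (1 - x ^ 2) := by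
  have hlog : 0 < 2 * log 2 := by positivity
  rw [fermiEntropy_eq_one_sub_entropyDeficit_div]
  constructor
  · have := entropyDeficit_le_two_mul_log_two_mul_sq hx
    rw [sub_le_sub_iff_left, div_le_iff₀ hlog]
    linarith
  · have := two_mul_log_two_mul_one_sub_sqrt_le_entropyDeficit hx
    rw [sub_le_comm, le_div_iff₀ hlog]
    linarith
end

section
/- Trace bounds on fermionic block entropies in terms of the covariance matrix: Let V be a real n×n matrix such that 1 − VVᵀ is positive semidefinite (equivalently, all singular values σ₁, …, σ_n of V lie in [0, 1]). Then tr[(1 − VVᵀ)^{1/2}] ≥ ∑_{k=1}^{n} f(σ_k) ≥ tr[1 − VVᵀ], where (1 − VVᵀ)^{1/2} is the unique positive semidefinite square root. The middle quantity ∑_k f(σ_k) is the von Neumann entropy (in bits) of the reduced state of a fermionic Gaussian state whose restricted covariance matrix is V. -/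
open scoped BigOperators
open Matrix

-- The unique positive semidefinite square root of a positive semidefinite real matrix
-- (junk value `0` otherwise).
open scoped Classical in
noncomputable def psqrt {n : Type*} [Fintype n] [DecidableEq n]
    (X : Matrix n n ℝ) : Matrix n n ℝ :=
  if h : X.PosSemidef then
    h.1.eigenvectorUnitary.1 * diagonal ((RCLike.ofReal : ℝ → ℝ) ∘ (√·) ∘ h.1.eigenvalues) *
      (star h.1.eigenvectorUnitary : Matrix n n ℝ)
  else 0

/-!
Write `t = σ²` for an eigenvalue of `V Vᵀ`. The entropy of the mode in nats is
`h t = binEntropy ((1 + √t) / 2)`, and the two traces are `∑ (1 - t)` and `∑ √(1 - t)`, so it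
suffices to show `(1 - t) log 2 ≤ h t ≤ √(1 - t) log 2` on `[0, 1]`. The lower bound holds because
`h` is concave in `t` and hence lies above its chord from `h 0 = log 2` to `h 1 = 0`; the upper
bound because `s ↦ h (1 - s²)` is convex and hence lies below its chord from `0` to `log 2`.
After one differentiation both convexity statements come down to `u ≤ artanh u` and to the
monotonicity of `artanh u / u` on `(0, 1)`, which are read off the series
`artanh u = ∑ u ^ (2k+1) / (2k+1)`.
-/

open Set Filter

namespace Real

lemma artanh_eq_half_log_sub_log {x : ℝ} (hx : x ∈ Ioo (-1) 1) :
    artanh x = (log (1 + x) - log (1 - x)) / 2 := by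
  rw [artanh_eq_half_log (Ioo_subset_Icc_self hx),
    log_div (by linarith [hx.1]) (by linarith [hx.2])]
  ring

lemma hasSum_artanh_div {x : ℝ} (hx₀ : x ≠ 0) (hx : |x| < 1) :
    HasSum (fun k : ℕ => x ^ (2 * k) / (2 * k + 1)) (artanh x / x) := by
  rw [artanh_eq_half_log_sub_log (abs_lt.mp hx)]
  have hterm : (fun k : ℕ => x ^ (2 * k) / (2 * k + 1)) =
      fun k : ℕ => 2 * (1 / (2 * k + 1)) * x ^ (2 * k + 1) / (2 * x) := by
    funext k
    field_simp
    ring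
  rw [hterm, div_div]
  exact (hasSum_log_sub_log_of_abs_lt_one hx).div_const _

lemma le_artanh {x : ℝ} (hx₀ : 0 ≤ x) (hx₁ : x < 1) : x ≤ artanh x := by
  rcases hx₀.eq_or_lt with rfl | hx₀
  · simp
  have h := le_hasSum (hasSum_artanh_div hx₀.ne' (abs_lt.mpr ⟨by linarith, hx₁⟩)) 0
    fun k _ => by positivity
  rw [le_div_iff₀ hx₀] at h
  simpa using h

lemma monotoneOn_artanh_div : MonotoneOn (fun x => artanh x / x) (Ioo 0 1) := by
  have hsum {z : ℝ} (hz : z ∈ Ioo 0 1) :=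
    hasSum_artanh_div hz.1.ne' (abs_lt.mpr ⟨by linarith [hz.1], hz.2⟩)
  intro x hx y hy hxy
  exact hasSum_le (fun k => by gcongr; exact hx.1.le) (hsum hx) (hsum hy)

lemma hasDerivAt_artanh {x : ℝ} (hx : x ∈ Ioo (-1) 1) :
    HasDerivAt artanh (1 - x ^ 2)⁻¹ x := by
  have hadd : 1 + x ≠ 0 := by linarith [hx.1]
  have hsub : 1 - x ≠ 0 := by linarith [hx.2]
  have hsq : 1 - x ^ 2 ≠ 0 := by nlinarith [hx.1, hx.2]
  have h := ((((hasDerivAt_id' x).const_add 1).log hadd).sub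
    (((hasDerivAt_id' x).const_sub 1).log hsub)).div_const 2
  refine (h.congr_deriv ?_).congr_of_eventuallyEq
    (eventually_of_mem (Ioo_mem_nhds hx.1 hx.2) fun y hy => artanh_eq_half_log_sub_log hy)
  field_simp
  ring

lemma sqrt_mem_Ioo_zero_one {t : ℝ} (ht : t ∈ Ioo 0 1) : √t ∈ Ioo 0 1 :=
  ⟨sqrt_pos.mpr ht.1, (sqrt_lt' one_pos).mpr (by linarith [ht.2])⟩

lemma hasDerivAt_binEntropy_one_add_sqrt_div_two {t : ℝ} (ht : t ∈ Ioo 0 1) :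
    HasDerivAt (fun t => binEntropy ((1 + √t) / 2)) (-(artanh √t / (2 * √t))) t := by
  obtain ⟨hs₀, hs₁⟩ := sqrt_mem_Ioo_zero_one ht
  have hp := hasDerivAt_binEntropy (p := (1 + √t) / 2) (by positivity) (by linarith)
  refine (hp.comp t (((hasDerivAt_sqrt ht.1.ne').const_add 1).div_const 2)).congr_deriv ?_
  rw [artanh_eq_half_log_sub_log ⟨by linarith, hs₁⟩,
    show 1 - (1 + √t) / 2 = (1 - √t) / 2 by ring, log_div (by linarith) two_ne_zero,
    log_div (by linarith) two_ne_zero]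
  field_simp
  ring

lemma concaveOn_binEntropy_one_add_sqrt_div_two :
    ConcaveOn ℝ (Icc 0 1) (fun t => binEntropy ((1 + √t) / 2)) := by
  refine AntitoneOn.concaveOn_of_deriv (convex_Icc 0 1) (by fun_prop) ?_ ?_ <;>
    rw [interior_Icc]
  · exact fun t ht => (hasDerivAt_binEntropy_one_add_sqrt_div_two ht).differentiableAt
      |>.differentiableWithinAt
  · intro t ht t' ht' htt'
    have h := monotoneOn_artanh_div (sqrt_mem_Ioo_zero_one ht) (sqrt_mem_Ioo_zero_one ht')
      (sqrt_le_sqrt htt')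
    simp only [(hasDerivAt_binEntropy_one_add_sqrt_div_two ht).deriv,
      (hasDerivAt_binEntropy_one_add_sqrt_div_two ht').deriv, mul_comm (2 : ℝ), ← div_div]
    linarith

lemma one_sub_mul_log_two_le_binEntropy_one_add_sqrt_div_two {t : ℝ} (ht : t ∈ Icc 0 1) :
    (1 - t) * log 2 ≤ binEntropy ((1 + √t) / 2) := by
  have h := concaveOn_binEntropy_one_add_sqrt_div_two.2 (left_mem_Icc.mpr zero_le_one)
    (right_mem_Icc.mpr zero_le_one) (sub_nonneg.mpr ht.2) ht.1 (sub_add_cancel 1 t)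
  norm_num at h
  rwa [one_div, binEntropy_two_inv] at h

lemma one_sub_sq_mem_Ioo_zero_one {s : ℝ} (hs : s ∈ Ioo 0 1) : 1 - s ^ 2 ∈ Ioo 0 1 :=
  ⟨by nlinarith [hs.1, hs.2], by nlinarith [hs.1]⟩

lemma hasDerivAt_binEntropy_one_add_sqrt_one_sub_sq_div_two {s : ℝ} (hs : s ∈ Ioo 0 1) :
    HasDerivAt (fun s => binEntropy ((1 + √(1 - s ^ 2)) / 2))
      (s * artanh √(1 - s ^ 2) / √(1 - s ^ 2)) s := by
  have hu := (sqrt_mem_Ioo_zero_one (one_sub_sq_mem_Ioo_zero_one hs)).1.ne'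
  have h := (hasDerivAt_binEntropy_one_add_sqrt_div_two (one_sub_sq_mem_Ioo_zero_one hs)).comp s
    ((hasDerivAt_pow 2 s).const_sub 1)
  refine h.congr_deriv ?_
  field_simp
  ring

lemma hasDerivAt_mul_artanh_sqrt_one_sub_sq_div {s : ℝ} (hs : s ∈ Ioo 0 1) :
    HasDerivAt (fun s => s * artanh √(1 - s ^ 2) / √(1 - s ^ 2))
      ((artanh √(1 - s ^ 2) - √(1 - s ^ 2)) / √(1 - s ^ 2) ^ 3) s := by
  have ht := one_sub_sq_mem_Ioo_zero_one hs
  have hu := sqrt_mem_Ioo_zero_one ht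
  have hsq : √(1 - s ^ 2) ^ 2 = 1 - s ^ 2 := sq_sqrt ht.1.le
  have hdu : HasDerivAt (fun s => √(1 - s ^ 2)) (-s / √(1 - s ^ 2)) s := by
    refine (((hasDerivAt_pow 2 s).const_sub 1).sqrt ht.1.ne').congr_deriv ?_
    norm_num
    field_simp
  have hart : HasDerivAt (fun s => artanh √(1 - s ^ 2)) (-1 / (s * √(1 - s ^ 2))) s := by
    refine ((hasDerivAt_artanh ⟨by linarith [hu.1], hu.2⟩).comp s hdu).congr_deriv ?_
    rw [hsq, sub_sub_cancel]
    field_simp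
  refine (((hasDerivAt_id' s).mul hart).div hdu hu.1.ne').congr_deriv ?_
  simp only [Pi.mul_apply]
  have hs₀ := hs.1.ne'
  generalize √(1 - s ^ 2) = u at hu hsq ⊢
  have hu₀ := hu.1.ne'
  field_simp
  linear_combination artanh u * hsq

lemma monotoneOn_mul_artanh_sqrt_one_sub_sq_div :
    MonotoneOn (fun s => s * artanh √(1 - s ^ 2) / √(1 - s ^ 2)) (Ioo 0 1) := by
  refine monotoneOn_of_deriv_nonneg (convex_Ioo 0 1)
    (fun s hs => (hasDerivAt_mul_artanh_sqrt_one_sub_sq_div hs).continuousAt.continuousWithinAt)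
    ?_ ?_ <;> rw [interior_Ioo]
  · exact fun s hs => (hasDerivAt_mul_artanh_sqrt_one_sub_sq_div hs).differentiableAt
      |>.differentiableWithinAt
  · intro s hs
    have hu := sqrt_mem_Ioo_zero_one (one_sub_sq_mem_Ioo_zero_one hs)
    rw [(hasDerivAt_mul_artanh_sqrt_one_sub_sq_div hs).deriv]
    exact div_nonneg (sub_nonneg.mpr (le_artanh hu.1.le hu.2)) (by positivity)

lemma convexOn_binEntropy_one_add_sqrt_one_sub_sq_div_two :
    ConvexOn ℝ (Icc 0 1) (fun s => binEntropy ((1 + √(1 - s ^ 2)) / 2)) := by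
  refine MonotoneOn.convexOn_of_deriv (convex_Icc 0 1) (by fun_prop) ?_ ?_ <;>
    rw [interior_Icc]
  · exact fun s hs => (hasDerivAt_binEntropy_one_add_sqrt_one_sub_sq_div_two hs).differentiableAt
      |>.differentiableWithinAt
  · intro s hs s' hs' hss'
    rw [(hasDerivAt_binEntropy_one_add_sqrt_one_sub_sq_div_two hs).deriv,
      (hasDerivAt_binEntropy_one_add_sqrt_one_sub_sq_div_two hs').deriv]
    exact monotoneOn_mul_artanh_sqrt_one_sub_sq_div hs hs' hss'

lemma binEntropy_one_add_sqrt_one_sub_sq_div_two_le_mul_log_two {s : ℝ} (hs : s ∈ Icc 0 1) :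
    binEntropy ((1 + √(1 - s ^ 2)) / 2) ≤ s * log 2 := by
  have h := convexOn_binEntropy_one_add_sqrt_one_sub_sq_div_two.2 (left_mem_Icc.mpr zero_le_one)
    (right_mem_Icc.mpr zero_le_one) (sub_nonneg.mpr hs.2) hs.1 (sub_add_cancel 1 s)
  norm_num at h
  rwa [one_div, binEntropy_two_inv] at h

end Real

open Real

lemma fermiEntropy_eq_binEntropy_div_log_two (x : ℝ) :
    fermiEntropy x = binEntropy ((1 + x) / 2) / log 2 := by
  rw [fermiEntropy, binEntropy, logb, logb, show 1 - (1 + x) / 2 = (1 - x) / 2 by ring,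
    log_inv, log_inv]
  ring

lemma one_sub_le_fermiEntropy_sqrt {t : ℝ} (ht : t ∈ Icc 0 1) :
    1 - t ≤ fermiEntropy √t := by
  rw [fermiEntropy_eq_binEntropy_div_log_two, le_div_iff₀ (log_pos one_lt_two)]
  exact one_sub_mul_log_two_le_binEntropy_one_add_sqrt_div_two ht

lemma fermiEntropy_sqrt_le_sqrt_one_sub {t : ℝ} (ht : t ∈ Icc 0 1) :
    fermiEntropy √t ≤ √(1 - t) := by
  have hs : √(1 - t) ∈ Icc 0 1 := ⟨sqrt_nonneg _, sqrt_le_one.mpr (by linarith [ht.1])⟩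
  have h := binEntropy_one_add_sqrt_one_sub_sq_div_two_le_mul_log_two hs
  rw [sq_sqrt (by linarith [ht.2]), sub_sub_cancel] at h
  rwa [fermiEntropy_eq_binEntropy_div_log_two, div_le_iff₀ (log_pos one_lt_two)]

namespace Matrix

open scoped ComplexOrder

variable {𝕜 n : Type*} [RCLike 𝕜] [Fintype n] [DecidableEq n] {A : Matrix n n 𝕜}

lemma IsHermitian.trace_cfc (hA : A.IsHermitian) (f : ℝ → ℝ) :
    (cfc f A).trace = ∑ i, (f (hA.eigenvalues i) : 𝕜) := by
  rw [hA.cfc_eq, IsHermitian.cfc, Unitary.conjStarAlgAut_apply, trace_mul_cycle,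
    Unitary.coe_star_mul_self, one_mul, trace_diagonal]
  rfl

lemma IsHermitian.eigenvalues_le_one (hA : A.IsHermitian) (h : (1 - A).PosSemidef) (i : n) :
    hA.eigenvalues i ≤ 1 := by
  have hv := RCLike.nonneg_iff.mp (h.dotProduct_mulVec_nonneg (hA.eigenvectorBasis i)) |>.1
  rw [sub_mulVec, one_mulVec, dotProduct_sub, map_sub, ← hA.eigenvalues_eq,
    dotProduct_comm, ← EuclideanSpace.inner_eq_star_dotProduct, inner_self_eq_norm_sq_to_K,
    hA.eigenvectorBasis.orthonormal.1 i] at hv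
  simpa using hv

end Matrix

lemma psqrt_eq_cfc {n : Type*} [Fintype n] [DecidableEq n] {X : Matrix n n ℝ}
    (hX : X.PosSemidef) : psqrt X = cfc Real.sqrt X := by
  rw [psqrt, dif_pos hX, hX.1.cfc_eq, IsHermitian.cfc, Unitary.conjStarAlgAut_apply]

/-- **Trace bounds on fermionic block entropies in terms of the covariance matrix.**
If `V` is a real `n×n` matrix with `1 − VVᵀ` positive semidefinite and `σ₁,…,σ_n` are its
singular values (the square roots of the eigenvalues of `VVᵀ`), then
`tr[(1 − VVᵀ)^{1/2}] ≥ ∑ₖ f(σₖ) ≥ tr[1 − VVᵀ]`. -/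
theorem fermionic_block_entropy_bounds (n : ℕ) (V : Matrix (Fin n) (Fin n) ℝ)
    (hV : (1 - V * Vᵀ).PosSemidef)
    (hVVT : (V * Vᵀ).IsHermitian) (σ : Fin n → ℝ)
    (hσ : ∀ k, σ k = Real.sqrt (hVVT.eigenvalues k)) :
    ∑ k, fermiEntropy (σ k) ≤ (psqrt (1 - V * Vᵀ)).trace ∧
    (1 - V * Vᵀ).trace ≤ ∑ k, fermiEntropy (σ k) := by
  have hVVT_psd : (V * Vᵀ).PosSemidef := by
    simpa using posSemidef_self_mul_conjTranspose V
  have heig (k : Fin n) : hVVT.eigenvalues k ∈ Icc 0 1 :=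
    ⟨hVVT_psd.eigenvalues_nonneg k, hVVT.eigenvalues_le_one hV k⟩
  -- `psqrt` diagonalises `1 - V * Vᵀ` in its own eigenbasis; passing to the functional calculus
  -- of `V * Vᵀ` expresses both traces through the eigenvalues of `V * Vᵀ`.
  have hsub : 1 - V * Vᵀ = cfc (fun x : ℝ => 1 - x) (V * Vᵀ) := by
    rw [cfc_sub (fun _ => 1) (fun x => x), cfc_const_one ℝ (V * Vᵀ), cfc_id' ℝ (V * Vᵀ)]
  simp only [hσ]
  constructor
  · rw [psqrt_eq_cfc hV, hsub, ← cfc_comp' Real.sqrt (fun x => 1 - x) (V * Vᵀ), hVVT.trace_cfc]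
    exact Finset.sum_le_sum fun k _ => fermiEntropy_sqrt_le_sqrt_one_sub (heig k)
  · rw [hsub, hVVT.trace_cfc]
    exact Finset.sum_le_sum fun k _ => one_sub_le_fermiEntropy_sqrt (heig k)
end

section
/- Gibbs variational principle in finite dimensions: Let H be a Hermitian complex n×n matrix, let β > 0, and let ρ_β = e^{−βH}/tr[e^{−βH}]. Then for every density matrix ρ (positive semidefinite n×n complex matrix with trace 1), tr[Hρ_β] − S(ρ_β)/β ≤ tr[Hρ] − S(ρ)/β, where S denotes the von Neumann entropy in nats, S(ρ) = −∑_k λ_k ln λ_k with λ_k the eigenvalues of ρ and 0·ln 0 = 0. That is, the Gibbs state minimizes the free energy F(ρ) = tr[Hρ] − S(ρ)/β over all density matrices. -/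
open scoped BigOperators
open Matrix

/-- The von Neumann entropy in nats: `S(ρ) = −∑ λᵢ ln λᵢ` where `λᵢ` are the eigenvalues
(junk value `0` if not Hermitian); `Real.log 0 = 0` makes `0·ln 0 = 0` automatic. -/
noncomputable def vNEntropyNats {n : Type*} [Fintype n] [DecidableEq n]
    (ρ : Matrix n n ℂ) : ℝ :=
  if h : ρ.IsHermitian then -∑ i, h.eigenvalues i * Real.log (h.eigenvalues i) else 0

attribute [local instance] Matrix.linftyOpNormedAddCommGroup Matrix.linftyOpNormedRing
  Matrix.linftyOpNormedAlgebra

/-- The matrix exponential. -/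
noncomputable def mexp {n : Type*} [Fintype n] [DecidableEq n] (A : Matrix n n ℂ) :
    Matrix n n ℂ :=
  NormedSpace.exp A

/-!
Diagonalize `H = U diag(E) U*` and `ρ = V diag(μ) V*`. Then `ρ_β = U diag(p) U*` for the Gibbs
distribution `p_i = e^{-βE_i} / Z`, and `β F(ρ_β) = -log Z`. With the doubly stochastic matrix
`B_ik = |(U*V)_ik|²` one has `tr[Hρ] = ∑ B_ik E_i μ_k`; substituting `βE_i = -log p_i - log Z`,
the bound `β F(ρ) ≥ -log Z` becomes `∑ B_ik μ_k log p_i ≤ ∑ μ_k log μ_k`, which follows by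
summing `μ log μ - μ log p ≥ μ - p` against the weights `B_ik`.
-/

namespace Matrix

variable {ι : Type*} [Fintype ι] [DecidableEq ι]

lemma IsHermitian.exists_unitary_conj_diagonal {A : Matrix ι ι ℂ} (hA : A.IsHermitian) :
    ∃ (u : unitaryGroup ι ℂ) (d : ι → ℝ),
      A = (u : Matrix ι ι ℂ) * diagonal (fun i => (d i : ℂ)) * star (u : Matrix ι ι ℂ) :=
  ⟨_, _, by simpa [Function.comp_def] using hA.spectral_theorem⟩

open scoped ComplexOrder in
lemma PosSemidef.exists_unitary_conj_diagonal_of_trace_eq_one {ρ : Matrix ι ι ℂ}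
    (hρ : ρ.PosSemidef) (htr : ρ.trace = 1) :
    ∃ (u : unitaryGroup ι ℂ) (μ : ι → ℝ), (∀ k, 0 ≤ μ k) ∧ ∑ k, μ k = 1 ∧
      ρ = (u : Matrix ι ι ℂ) * diagonal (fun k => (μ k : ℂ)) * star (u : Matrix ι ι ℂ) := by
  refine ⟨_, _, hρ.eigenvalues_nonneg, ?_,
    by simpa [Function.comp_def] using hρ.1.spectral_theorem⟩
  simpa [htr] using congrArg Complex.re hρ.1.trace_eq_sum_eigenvalues.symm

lemma IsHermitian.sum_comp_eigenvalues_of_eq_unitary_conj_diagonal {A : Matrix ι ι ℂ}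
    (hA : A.IsHermitian) (u : unitaryGroup ι ℂ) {d : ι → ℝ}
    (hAd : A = (u : Matrix ι ι ℂ) * diagonal (fun i => (d i : ℂ)) * star (u : Matrix ι ι ℂ))
    (g : ℝ → ℝ) : ∑ i, g (hA.eigenvalues i) = ∑ i, g (d i) := by
  have hcharpoly : A.charpoly = ∏ i, (Polynomial.X - Polynomial.C (d i : ℂ)) := by
    rw [hAd, charpoly_mul_comm, ← mul_assoc, Unitary.coe_star_mul_self, one_mul,
      charpoly_diagonal]
  have hroots := hA.roots_charpoly_eq_eigenvalues
  rw [hcharpoly, Polynomial.roots_prod _ _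
    (by simp [Finset.prod_ne_zero_iff, Polynomial.X_sub_C_ne_zero])] at hroots
  simp only [Polynomial.roots_X_sub_C, Multiset.bind_singleton] at hroots
  have hmap : Finset.univ.val.map hA.eigenvalues = Finset.univ.val.map d :=
    Multiset.map_injective Complex.ofReal_injective <| by
      simpa [Multiset.map_map, Function.comp_def] using hroots.symm
  simpa only [Multiset.map_map, Function.comp_def, Finset.sum_map_val] using
    congrArg (fun s => (s.map g).sum) hmap

lemma trace_conj_diagonal_mul_conj_diagonal (U V : Matrix ι ι ℂ) (a c : ι → ℝ) :
    (U * diagonal (fun i => (a i : ℂ)) * star U *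
        (V * diagonal (fun k => (c k : ℂ)) * star V)).trace =
      ∑ i, ∑ k, (Complex.normSq ((star U * V) i k) * a i * c k : ℝ) := by
  calc (U * diagonal (fun i => (a i : ℂ)) * star U *
        (V * diagonal (fun k => (c k : ℂ)) * star V)).trace
      = (diagonal (fun i => (a i : ℂ)) * (star U * V) * diagonal (fun k => (c k : ℂ)) *
          star (star U * V)).trace := by
        rw [Matrix.mul_assoc U, Matrix.mul_assoc U, trace_mul_comm U]
        simp only [star_mul, star_star, Matrix.mul_assoc]
    _ = _ := by
        simp only [trace, diag_apply, mul_apply (M := _ * _ * _), diagonal_mul, mul_diagonal,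
          star_apply, Complex.star_def, Complex.ofReal_sum]
        refine Finset.sum_congr rfl fun i _ => Finset.sum_congr rfl fun k _ => ?_
        rw [Complex.ofReal_mul, Complex.ofReal_mul, ← Complex.mul_conj]
        ring

lemma normSq_mem_doublyStochastic (u : unitaryGroup ι ℂ) :
    (of fun i k => Complex.normSq ((u : Matrix ι ι ℂ) i k)) ∈ doublyStochastic ℝ ι := by
  refine mem_doublyStochastic_iff_sum.mpr
    ⟨fun i k => Complex.normSq_nonneg _, fun i => ?_, fun k => ?_⟩
  · simpa [mul_apply, Complex.mul_conj, Complex.re_sum] using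
      congrArg (fun M : Matrix ι ι ℂ => (M i i).re) (Unitary.coe_mul_star_self u)
  · simpa [mul_apply, Complex.normSq_apply, Complex.re_sum] using
      congrArg (fun M : Matrix ι ι ℂ => (M k k).re) (Unitary.coe_star_mul_self u)

end Matrix

section UnitaryConj

variable {ι : Type*} [Fintype ι] [DecidableEq ι]

lemma mexp_unitary_conj (u : unitaryGroup ι ℂ) (A : Matrix ι ι ℂ) :
    mexp ((u : Matrix ι ι ℂ) * A * star (u : Matrix ι ι ℂ)) =
      (u : Matrix ι ι ℂ) * mexp A * star (u : Matrix ι ι ℂ) := by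
  simpa [mexp] using exp_units_conj (Unitary.toUnits u) A

lemma mexp_diagonal (d : ι → ℂ) :
    mexp (diagonal d) = diagonal (fun i => Complex.exp (d i)) := by
  rw [mexp, exp_diagonal, Pi.exp_def]
  simp only [Complex.exp_eq_exp_ℂ]

lemma vNEntropyNats_unitary_conj_diagonal (u : unitaryGroup ι ℂ) (d : ι → ℝ) :
    vNEntropyNats
        ((u : Matrix ι ι ℂ) * diagonal (fun i => (d i : ℂ)) * star (u : Matrix ι ι ℂ)) =
      -∑ i, d i * Real.log (d i) := by
  have hherm : ((u : Matrix ι ι ℂ) * diagonal (fun i => (d i : ℂ)) *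
      star (u : Matrix ι ι ℂ)).IsHermitian :=
    isHermitian_mul_mul_conjTranspose _ <|
      isHermitian_diagonal_iff.mpr fun i => Complex.conj_ofReal (d i)
  rw [vNEntropyNats, dif_pos hherm,
    hherm.sum_comp_eigenvalues_of_eq_unitary_conj_diagonal u rfl (fun x => x * Real.log x)]

end UnitaryConj

lemma sub_le_mul_log_sub_mul_log {x y : ℝ} (hx : 0 ≤ x) (hy : 0 < y) :
    x - y ≤ x * Real.log x - x * Real.log y := by
  rcases hx.eq_or_lt with rfl | hx
  · simpa using hy.le
  have hlog := mul_le_mul_of_nonneg_left (Real.log_le_sub_one_of_pos (div_pos hy hx)) hx.le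
  rw [Real.log_div hy.ne' hx.ne', mul_sub, mul_sub, mul_div_cancel₀ _ hx.ne', mul_one] at hlog
  linarith

lemma sum_sub_sum_le_of_mem_doublyStochastic {ι : Type*} [Fintype ι] [DecidableEq ι]
    {B : Matrix ι ι ℝ} (hB : B ∈ doublyStochastic ℝ ι) {μ p : ι → ℝ} (hμ : ∀ k, 0 ≤ μ k)
    (hp : ∀ i, 0 < p i) :
    ∑ k, μ k - ∑ i, p i ≤
      ∑ k, μ k * Real.log (μ k) - ∑ i, ∑ k, B i k * μ k * Real.log (p i) := by
  obtain ⟨hB0, hrow, hcol⟩ := mem_doublyStochastic_iff_sum.mp hB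
  have hcol_sum (f : ι → ℝ) : ∑ i, ∑ k, B i k * f k = ∑ k, f k := by
    rw [Finset.sum_comm]
    simp_rw [← Finset.sum_mul, hcol, one_mul]
  have hrow_sum (f : ι → ℝ) : ∑ i, ∑ k, B i k * f i = ∑ i, f i := by
    simp_rw [← Finset.sum_mul, hrow, one_mul]
  calc ∑ k, μ k - ∑ i, p i = ∑ i, ∑ k, B i k * (μ k - p i) := by
        simp_rw [mul_sub, Finset.sum_sub_distrib, hcol_sum, hrow_sum]
    _ ≤ ∑ i, ∑ k, B i k * (μ k * Real.log (μ k) - μ k * Real.log (p i)) :=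
        Finset.sum_le_sum fun i _ => Finset.sum_le_sum fun k _ =>
          mul_le_mul_of_nonneg_left (sub_le_mul_log_sub_mul_log (hμ k) (hp i)) (hB0 i k)
    _ = _ := by
        simp_rw [mul_sub, Finset.sum_sub_distrib, hcol_sum (fun k => μ k * Real.log (μ k)),
          mul_assoc]

section GibbsDistribution

variable {ι : Type*} [Fintype ι]

noncomputable def partitionFunction (β : ℝ) (E : ι → ℝ) : ℝ :=
  ∑ i, Real.exp (-β * E i)

noncomputable def gibbsDistribution (β : ℝ) (E : ι → ℝ) (i : ι) : ℝ :=
  Real.exp (-β * E i) / partitionFunction β E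

variable (β : ℝ) (E : ι → ℝ) [Nonempty ι]

lemma partitionFunction_pos : 0 < partitionFunction β E :=
  Finset.sum_pos (fun _ _ => Real.exp_pos _) Finset.univ_nonempty

lemma gibbsDistribution_pos (i : ι) : 0 < gibbsDistribution β E i :=
  div_pos (Real.exp_pos _) (partitionFunction_pos β E)

lemma sum_gibbsDistribution : ∑ i, gibbsDistribution β E i = 1 := by
  simp_rw [gibbsDistribution, ← Finset.sum_div]
  exact div_self (partitionFunction_pos β E).ne'

lemma log_gibbsDistribution (i : ι) :
    Real.log (gibbsDistribution β E i) = -β * E i - Real.log (partitionFunction β E) := by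
  rw [gibbsDistribution, Real.log_div (Real.exp_pos _).ne' (partitionFunction_pos β E).ne',
    Real.log_exp]

lemma energy_sub_entropy_gibbsDistribution (hβ : β ≠ 0) :
    ∑ i, E i * gibbsDistribution β E i -
        (-∑ i, gibbsDistribution β E i * Real.log (gibbsDistribution β E i)) / β =
      -Real.log (partitionFunction β E) / β := by
  have hentropy : ∑ i, gibbsDistribution β E i * Real.log (gibbsDistribution β E i) =
      -β * ∑ i, E i * gibbsDistribution β E i - Real.log (partitionFunction β E) := by
    simp_rw [log_gibbsDistribution, mul_sub, Finset.sum_sub_distrib, ← Finset.sum_mul,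
      sum_gibbsDistribution, one_mul, Finset.mul_sum]
    congr 1
    exact Finset.sum_congr rfl fun i _ => by ring
  rw [hentropy]
  field_simp
  ring

lemma neg_log_partitionFunction_div_le_of_mem_doublyStochastic [DecidableEq ι] (hβ : 0 < β)
    {B : Matrix ι ι ℝ} (hB : B ∈ doublyStochastic ℝ ι) {μ : ι → ℝ}
    (hμ : ∀ k, 0 ≤ μ k) (hμ1 : ∑ k, μ k = 1) :
    -Real.log (partitionFunction β E) / β ≤
      ∑ i, ∑ k, B i k * E i * μ k - (-∑ k, μ k * Real.log (μ k)) / β := by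
  have hklein := sum_sub_sum_le_of_mem_doublyStochastic hB hμ (gibbsDistribution_pos β E)
  rw [hμ1, sum_gibbsDistribution, sub_self] at hklein
  have hmass : ∑ i, ∑ k, B i k * μ k = 1 := by
    simpa [mulVec, dotProduct, hμ1] using sum_mulVec_of_mem_doublyStochastic hB (x := μ)
  have hcross : ∑ i, ∑ k, B i k * μ k * Real.log (gibbsDistribution β E i) =
      -β * ∑ i, ∑ k, B i k * E i * μ k - Real.log (partitionFunction β E) := by
    calc ∑ i, ∑ k, B i k * μ k * Real.log (gibbsDistribution β E i)
        = ∑ i, ∑ k, (-β * (B i k * E i * μ k) -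
            Real.log (partitionFunction β E) * (B i k * μ k)) :=
          Finset.sum_congr rfl fun i _ => Finset.sum_congr rfl fun k _ => by
            rw [log_gibbsDistribution]; ring
      _ = -β * ∑ i, ∑ k, B i k * E i * μ k - Real.log (partitionFunction β E) := by
          simp only [Finset.sum_sub_distrib, ← Finset.mul_sum, hmass, mul_one]
  rw [hcross] at hklein
  rw [le_sub_iff_add_le, ← add_div, div_le_iff₀ hβ]
  linarith

end GibbsDistribution

section FreeEnergy

variable {ι : Type*} [Fintype ι] [DecidableEq ι]

noncomputable def gibbsState (β : ℝ) (H : Matrix ι ι ℂ) : Matrix ι ι ℂ :=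
  (mexp ((-β : ℂ) • H)).trace⁻¹ • mexp ((-β : ℂ) • H)

noncomputable def freeEnergy (β : ℝ) (H ρ : Matrix ι ι ℂ) : ℝ :=
  (H * ρ).trace.re - vNEntropyNats ρ / β

lemma gibbsState_unitary_conj_diagonal (β : ℝ) (u : unitaryGroup ι ℂ) (E : ι → ℝ) :
    gibbsState β
        ((u : Matrix ι ι ℂ) * diagonal (fun i => (E i : ℂ)) * star (u : Matrix ι ι ℂ)) =
      (u : Matrix ι ι ℂ) * diagonal (fun i => (gibbsDistribution β E i : ℂ)) *
        star (u : Matrix ι ι ℂ) := by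
  have hexp : mexp ((-β : ℂ) •
      ((u : Matrix ι ι ℂ) * diagonal (fun i => (E i : ℂ)) * star (u : Matrix ι ι ℂ))) =
      (u : Matrix ι ι ℂ) * diagonal (fun i => (Real.exp (-β * E i) : ℂ)) *
        star (u : Matrix ι ι ℂ) := by
    rw [← Matrix.smul_mul, ← Matrix.mul_smul, ← diagonal_smul, mexp_unitary_conj,
      mexp_diagonal]
    simp
  rw [gibbsState, hexp, trace_mul_cycle, Unitary.coe_star_mul_self, one_mul, trace_diagonal,
    ← Matrix.smul_mul, ← Matrix.mul_smul, ← diagonal_smul]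
  congr
  ext i
  simp [gibbsDistribution, partitionFunction, div_eq_inv_mul]

lemma freeEnergy_conj_diagonal_unitary_conj_diagonal (β : ℝ) (U : Matrix ι ι ℂ)
    (v : unitaryGroup ι ℂ) (E μ : ι → ℝ) :
    freeEnergy β (U * diagonal (fun i => (E i : ℂ)) * star U)
        ((v : Matrix ι ι ℂ) * diagonal (fun k => (μ k : ℂ)) * star (v : Matrix ι ι ℂ)) =
      ∑ i, ∑ k, Complex.normSq ((star U * v) i k) * E i * μ k -
        (-∑ k, μ k * Real.log (μ k)) / β := by
  rw [freeEnergy, trace_conj_diagonal_mul_conj_diagonal, Complex.ofReal_re,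
    vNEntropyNats_unitary_conj_diagonal]

lemma freeEnergy_unitary_conj_diagonal_self (β : ℝ) (u : unitaryGroup ι ℂ) (E μ : ι → ℝ) :
    freeEnergy β
        ((u : Matrix ι ι ℂ) * diagonal (fun i => (E i : ℂ)) * star (u : Matrix ι ι ℂ))
        ((u : Matrix ι ι ℂ) * diagonal (fun k => (μ k : ℂ)) * star (u : Matrix ι ι ℂ)) =
      ∑ i, E i * μ i - (-∑ i, μ i * Real.log (μ i)) / β := by
  rw [freeEnergy_conj_diagonal_unitary_conj_diagonal, Unitary.coe_star_mul_self]
  simp [one_apply]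

end FreeEnergy

open scoped ComplexOrder in
/-- **Gibbs variational principle in finite dimensions.** For a Hermitian `H` and `β > 0`,
the Gibbs state `ρ_β = e^{−βH}/tr[e^{−βH}]` minimizes the free energy
`F(ρ) = tr[Hρ] − S(ρ)/β` over all density matrices `ρ`. -/
theorem gibbs_variational_principle (n : ℕ) (H : Matrix (Fin n) (Fin n) ℂ)
    (hH : H.IsHermitian) (β : ℝ) (hβ : 0 < β)
    (ρβ : Matrix (Fin n) (Fin n) ℂ)
    (hρβ : ρβ = ((mexp ((-β : ℂ) • H)).trace)⁻¹ • mexp ((-β : ℂ) • H))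
    (ρ : Matrix (Fin n) (Fin n) ℂ) (hρ : ρ.PosSemidef) (htr : ρ.trace = 1) :
    (H * ρβ).trace.re - vNEntropyNats ρβ / β ≤ (H * ρ).trace.re - vNEntropyNats ρ / β := by
  obtain ⟨V, μ, hμ, hμ1, rfl⟩ := hρ.exists_unitary_conj_diagonal_of_trace_eq_one htr
  obtain ⟨U, E, rfl⟩ := hH.exists_unitary_conj_diagonal
  have : Nonempty (Fin n) :=
    Finset.univ_nonempty_iff.mp (Finset.nonempty_of_sum_ne_zero (hμ1 ▸ one_ne_zero))
  obtain rfl : ρβ = gibbsState β _ := hρβ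
  change freeEnergy β _ _ ≤ freeEnergy β _ _
  rw [gibbsState_unitary_conj_diagonal]
  calc freeEnergy β _ _ = -Real.log (partitionFunction β E) / β := by
        rw [freeEnergy_unitary_conj_diagonal_self,
          energy_sub_entropy_gibbsDistribution β E hβ.ne']
    _ ≤ _ := by
        rw [freeEnergy_conj_diagonal_unitary_conj_diagonal]
        exact neg_log_partitionFunction_div_le_of_mem_doublyStochastic β E hβ
          (Matrix.normSq_mem_doublyStochastic (star U * V)) hμ hμ1
end

section
/- Truncation error bound via Renyi entropies: Let α ∈ (0, 1) and let p₁ ≥ p₂ ≥ ⋯ ≥ p_m ≥ 0 be a nonincreasing finite sequence with ∑_{i=1}^m p_i ≤ 1. Then for every integer D with 1 ≤ D < m, ∑_{i=D+1}^{m} p_i ≤ (∑_{i=1}^{m} p_i^α)^{1/α} · D^{−(1−α)/α}. In particular, if the α-Renyi entropy S_α = (1/(1−α)) log₂ ∑_i p_i^α is bounded by a constant, the tail weight beyond the D largest terms decays polynomially in D at rate (1−α)/α. -/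
open scoped BigOperators
open Finset

/-!
If `q = p_D` is the `(D+1)`-st largest weight, the `D` weights before it each have `α`-th power
at least `q^α`, so `q^α ≤ A / D` with `A = ∑ pᵢ^α`. Every tail weight satisfies
`pᵢ = pᵢ^(1-α) pᵢ^α ≤ q^(1-α) pᵢ^α`, so the tail is at most
`q^(1-α) A = (q^α)^((1-α)/α) A ≤ (A / D)^((1-α)/α) A = A^(1/α) D^(-(1-α)/α)`.
-/

section RenyiTail

variable {ι : Type*} {α : ℝ}

lemma sum_le_rpow_mul_sum_rpow (s : Finset ι) {p : ι → ℝ} {c : ℝ} (hα1 : α ≤ 1)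
    (h0 : ∀ i ∈ s, 0 ≤ p i) (hc : ∀ i ∈ s, p i ≤ c) :
    ∑ i ∈ s, p i ≤ c ^ (1 - α) * ∑ i ∈ s, p i ^ α := by
  rw [mul_sum]
  refine sum_le_sum fun i hi => ?_
  calc p i = p i ^ (1 - α) * p i ^ α := by
        rw [← Real.rpow_add' (h0 i hi) (by norm_num), sub_add_cancel, Real.rpow_one]
    _ ≤ c ^ (1 - α) * p i ^ α := mul_le_mul_of_nonneg_right
        (Real.rpow_le_rpow (h0 i hi) (hc i hi) (by linarith)) (Real.rpow_nonneg (h0 i hi) α)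

variable [Fintype ι] [LinearOrder ι] [LocallyFiniteOrderBot ι] {p : ι → ℝ}

lemma card_Iio_mul_rpow_le_sum_rpow (hp : Antitone p) (h0 : ∀ i, 0 ≤ p i) (hα0 : 0 ≤ α)
    (d : ι) : (#(Iio d) : ℝ) * p d ^ α ≤ ∑ i, p i ^ α := by
  calc (#(Iio d) : ℝ) * p d ^ α = ∑ _i ∈ Iio d, p d ^ α := by
        rw [sum_const, nsmul_eq_mul]
    _ ≤ ∑ i ∈ Iio d, p i ^ α := sum_le_sum fun i hi =>
        Real.rpow_le_rpow (h0 d) (hp (mem_Iio.mp hi).le) hα0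
    _ ≤ ∑ i, p i ^ α := sum_le_univ_sum_of_nonneg fun i => Real.rpow_nonneg (h0 i) α

theorem sum_Ici_le_rpow_sum_rpow_mul_card_Iio_rpow [LocallyFiniteOrderTop ι] (hp : Antitone p)
    (h0 : ∀ i, 0 ≤ p i) (hα0 : 0 < α) (hα1 : α ≤ 1) (d : ι) (hd : 0 < #(Iio d)) :
    ∑ i ∈ Ici d, p i ≤
      (∑ i, p i ^ α) ^ (1 / α) * (#(Iio d) : ℝ) ^ (-(1 - α) / α) := by
  set A := ∑ i, p i ^ α
  set D : ℝ := ((#(Iio d) : ℕ) : ℝ)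
  have hA0 : 0 ≤ A := sum_nonneg fun i _ => Real.rpow_nonneg (h0 i) α
  have hD0 : 0 < D := Nat.cast_pos.mpr hd
  have hexp : 0 ≤ (1 - α) / α := div_nonneg (by linarith) hα0.le
  have hhead : p d ^ α ≤ A / D := by
    rw [le_div_iff₀ hD0, mul_comm]
    exact card_Iio_mul_rpow_le_sum_rpow hp h0 hα0.le d
  have htail : ∑ i ∈ Ici d, p i ≤ p d ^ (1 - α) * A := by
    refine (sum_le_rpow_mul_sum_rpow _ hα1 (fun i _ => h0 i)
      fun i hi => hp (mem_Ici.mp hi)).trans ?_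
    exact mul_le_mul_of_nonneg_left (sum_le_univ_sum_of_nonneg fun i => Real.rpow_nonneg (h0 i) α)
      (Real.rpow_nonneg (h0 d) _)
  have hhead_pow : p d ^ (1 - α) ≤ (A / D) ^ ((1 - α) / α) := by
    have hpow : p d ^ (1 - α) = (p d ^ α) ^ ((1 - α) / α) := by
      rw [← Real.rpow_mul (h0 d), mul_div_cancel₀ _ hα0.ne']
    exact hpow ▸ Real.rpow_le_rpow (Real.rpow_nonneg (h0 d) α) hhead hexp
  calc ∑ i ∈ Ici d, p i ≤ p d ^ (1 - α) * A := htail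
    _ ≤ (A / D) ^ ((1 - α) / α) * A := by gcongr
    _ = A ^ ((1 - α) / α + 1) * D ^ (-((1 - α) / α)) := by
        rw [Real.div_rpow hA0 hD0.le, Real.rpow_neg hD0.le,
          Real.rpow_add' hA0 (by positivity), Real.rpow_one]
        ring
    _ = A ^ (1 / α) * D ^ (-(1 - α) / α) := by
        congr 2
        · field_simp
          ring
        · ring

end RenyiTail

theorem renyi_truncation_bound_general (α : ℝ) (hα0 : 0 < α) (hα1 : α < 1)
    (m : ℕ) (p : Fin m → ℝ)
    (hmono : ∀ i j : Fin m, i ≤ j → p j ≤ p i)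
    (hnonneg : ∀ i, 0 ≤ p i)
    (D : ℕ) (hD1 : 1 ≤ D) (hDm : D < m) :
    ∑ i ∈ Finset.univ.filter (fun i : Fin m => D ≤ (i : ℕ)), p i ≤
      (∑ i, p i ^ α) ^ (1 / α) * (D : ℝ) ^ (-(1 - α) / α) := by
  let d : Fin m := ⟨D, hDm⟩
  have hcard : #(Iio d) = D := Fin.card_Iio d
  have htail : univ.filter (fun i : Fin m => D ≤ (i : ℕ)) = Ici d := by
    ext i
    simp [d, Fin.le_def]
  rw [htail, ← hcard]
  exact sum_Ici_le_rpow_sum_rpow_mul_card_Iio_rpow (fun i j h => hmono i j h) hnonneg hα0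
    hα1.le d (hcard ▸ hD1)

/-- **Truncation error bound via Renyi entropies.** For `α ∈ (0,1)` and a nonincreasing
sequence `p₁ ≥ ⋯ ≥ p_m ≥ 0` with `∑ pᵢ ≤ 1`, the tail beyond the `D` largest terms obeys
`∑_{i>D} pᵢ ≤ (∑ᵢ pᵢ^α)^{1/α} · D^{−(1−α)/α}` for every `1 ≤ D < m`. -/
theorem renyi_truncation_bound (α : ℝ) (hα0 : 0 < α) (hα1 : α < 1)
    (m : ℕ) (p : Fin m → ℝ)
    (hmono : ∀ i j : Fin m, i ≤ j → p j ≤ p i)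
    (hnonneg : ∀ i, 0 ≤ p i)
    (hsum : ∑ i, p i ≤ 1)
    (D : ℕ) (hD1 : 1 ≤ D) (hDm : D < m) :
    ∑ i ∈ Finset.univ.filter (fun i : Fin m => D ≤ (i : ℕ)), p i ≤
      (∑ i, p i ^ α) ^ (1 / α) * (D : ℝ) ^ (-(1 - α) / α) :=
  renyi_truncation_bound_general α hα0 hα1 m p hmono hnonneg D hD1 hDm
end
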